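/- The sum of 1/(b²d²(b+d)²) over all pairs of coprime positive integers (b,d) converges and equals 1/3. -/

import Mathlib

/-!
Every coprime pair of positive integers occurs exactly once in the Calkin–Wilf tree: its root is
`(1, 1)` and the children of `(x, y)` are `(x + y, y)` and `(x, x + y)`; running the subtractive
Euclidean algorithm backwards walks from any coprime pair up to the root. For the potential
`g (x, y) = 1 / (3 x³ y³)`, the summand at a node is `g` there minus `g` at its two children, so
the sum over the first `n` levels telescopes to `g (1, 1) = 1 / 3` minus the sum of `g` over
level `n`. This remainder tends to zero: `1 / (x y)` sums to `1` over every level, because it also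
splits additively between the children, while `x y > n` on level `n`, so the remainder is at most
`1 / (3 (n + 1)²)`.
-/

open Finset Filter Topology

theorem hasSum_of_tendsto_sum_of_nonneg {ι : Type*} {f : ι → ℝ} (hf : ∀ i, 0 ≤ f i)
    {s : ℕ → Finset ι} (hs : Monotone s) (hcover : ∀ i, ∃ n, i ∈ s n) {a : ℝ}
    (h : Tendsto (fun n => ∑ i ∈ s n, f i) atTop (𝓝 a)) : HasSum f a := by
  have hmono : Monotone fun n => ∑ i ∈ s n, f i := fun m n hmn =>
    sum_le_sum_of_subset_of_nonneg (hs hmn) fun i _ _ => hf i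
  refine hasSum_of_isLUB_of_nonneg a hf ⟨?_, fun b hb => ?_⟩
  · rintro _ ⟨u, rfl⟩
    obtain ⟨n, hn⟩ :=
      ((tendsto_atTop_finset_of_monotone hs hcover).eventually_ge_atTop u).exists
    exact (sum_le_sum_of_subset_of_nonneg hn fun i _ _ => hf i).trans (hmono.ge_of_tendsto h n)
  · exact le_of_tendsto' h fun n => hb ⟨s n, rfl⟩

def treeLevel : ℕ → Finset (List Bool)
  | 0 => {[]}
  | n + 1 => (treeLevel n).image (false :: ·) ∪ (treeLevel n).image (true :: ·)

def treeBelow (n : ℕ) : Finset (List Bool) := (range n).biUnion treeLevel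

theorem mem_treeLevel {n : ℕ} {l : List Bool} : l ∈ treeLevel n ↔ l.length = n := by
  induction n generalizing l with
  | zero => simp [treeLevel]
  | succ n ih => cases l with
    | nil => simp [treeLevel]
    | cons b l => cases b <;> simp [treeLevel, ih]

theorem mem_treeBelow {n : ℕ} {l : List Bool} : l ∈ treeBelow n ↔ l.length < n := by
  simp [treeBelow, mem_treeLevel]

theorem treeBelow_mono : Monotone treeBelow := fun _ _ hmn _ => by
  simp only [mem_treeBelow]; omega

theorem sum_treeLevel_succ {M : Type*} [AddCommMonoid M] (F : List Bool → M) (n : ℕ) :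
    ∑ l ∈ treeLevel (n + 1), F l = ∑ l ∈ treeLevel n, (F (false :: l) + F (true :: l)) := by
  rw [treeLevel, sum_union (by simp [disjoint_left]), sum_image (by simp), sum_image (by simp),
    sum_add_distrib]

theorem sum_treeBelow {M : Type*} [AddCommMonoid M] (F : List Bool → M) (n : ℕ) :
    ∑ l ∈ treeBelow n, F l = ∑ k ∈ range n, ∑ l ∈ treeLevel k, F l :=
  sum_biUnion fun _ _ _ _ hjk => disjoint_left.2 fun _ hj hk =>
    hjk ((mem_treeLevel.1 hj).symm.trans (mem_treeLevel.1 hk))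

theorem sum_treeLevel_of_additive {M : Type*} [AddCommMonoid M] {g : List Bool → M}
    (hg : ∀ l, g (false :: l) + g (true :: l) = g l) (n : ℕ) :
    ∑ l ∈ treeLevel n, g l = g [] := by
  induction n with
  | zero => simp [treeLevel]
  | succ n ih => rw [sum_treeLevel_succ, ← ih]; exact sum_congr rfl fun l _ => hg l

theorem sum_treeBelow_of_telescoping {M : Type*} [AddCommGroup M] {t g : List Bool → M}
    (htg : ∀ l, t l = g l - g (false :: l) - g (true :: l)) (n : ℕ) :
    ∑ l ∈ treeBelow n, t l = g [] - ∑ l ∈ treeLevel n, g l := by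
  rw [sum_treeBelow]
  induction n with
  | zero => simp [treeLevel]
  | succ n ih =>
    rw [sum_range_succ, ih, sum_treeLevel_succ]
    simp only [htg, sum_sub_distrib, sum_add_distrib]
    abel

theorem hasSum_of_tree_telescoping {t g : List Bool → ℝ} (ht : ∀ l, 0 ≤ t l)
    (htg : ∀ l, t l = g l - g (false :: l) - g (true :: l))
    (hg : Tendsto (fun n => ∑ l ∈ treeLevel n, g l) atTop (𝓝 0)) : HasSum t (g []) := by
  refine hasSum_of_tendsto_sum_of_nonneg ht treeBelow_mono
    (fun l => ⟨l.length + 1, mem_treeBelow.2 l.length.lt_succ_self⟩) ?_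
  simp only [sum_treeBelow_of_telescoping htg]
  simpa using hg.const_sub (g [])

theorem one_div_mul_eq_add {K : Type*} [Field K] {x y : K} (hx : x ≠ 0) (hy : y ≠ 0)
    (hxy : x + y ≠ 0) : 1 / (x * y) = 1 / ((x + y) * y) + 1 / (x * (x + y)) := by
  field_simp

-- Cleared of denominators, this is `(x + y) ^ 3 - x ^ 3 - y ^ 3 = 3 * x * y * (x + y)`.
theorem one_div_sq_mul_sq_mul_add_sq {K : Type*} [Field K] (h3 : (3 : K) ≠ 0) {x y : K}
    (hx : x ≠ 0) (hy : y ≠ 0) (hxy : x + y ≠ 0) :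
    1 / (x ^ 2 * y ^ 2 * (x + y) ^ 2) =
      1 / (3 * x ^ 3 * y ^ 3) - 1 / (3 * (x + y) ^ 3 * y ^ 3) - 1 / (3 * x ^ 3 * (x + y) ^ 3) := by
  field_simp
  ring

namespace CalkinWilf

def pair : List Bool → ℕ × ℕ
  | [] => (1, 1)
  | false :: l => ((pair l).1 + (pair l).2, (pair l).2)
  | true :: l => ((pair l).1, (pair l).1 + (pair l).2)

theorem pair_pos (l : List Bool) : 0 < (pair l).1 ∧ 0 < (pair l).2 := by
  induction l with
  | nil => simp [pair]
  | cons b l ih => cases b <;> simp only [pair] <;> omega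

theorem coprime_pair (l : List Bool) : Nat.Coprime (pair l).1 (pair l).2 := by
  induction l with
  | nil => simp [pair]
  | cons b l ih => cases b <;> simpa [pair, Nat.Coprime] using ih

theorem length_lt_mul_pair (l : List Bool) : l.length < (pair l).1 * (pair l).2 := by
  induction l with
  | nil => simp [pair]
  | cons b l ih =>
    obtain ⟨hx, hy⟩ := pair_pos l
    cases b <;> simp only [pair, List.length_cons] <;> nlinarith

theorem pair_injective : Function.Injective pair := by
  intro l
  induction l with
  | nil =>
    rintro (_ | ⟨b, m⟩) h
    · rfl
    · have := pair_pos m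
      cases b <;> simp [pair, Prod.ext_iff] at h <;> omega
  | cons b l ih =>
    rintro (_ | ⟨b', m⟩) h
    · have := pair_pos l
      cases b <;> simp [pair, Prod.ext_iff] at h <;> omega
    · have := pair_pos l
      have := pair_pos m
      cases b <;> cases b' <;> simp [pair, Prod.ext_iff] at h ⊢ <;>
        first | omega | exact ih (Prod.ext (by omega) (by omega))

theorem exists_pair_eq {x y : ℕ} (hx : 0 < x) (hy : 0 < y) (hxy : Nat.Coprime x y) :
    ∃ l, pair l = (x, y) := by
  induction hs : x + y using Nat.strong_induction_on generalizing x y with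
  | _ s ih =>
  rcases lt_trichotomy x y with hlt | rfl | hgt
  · obtain ⟨l, hl⟩ := ih (x + (y - x)) (by omega) hx (by omega)
      (by rwa [Nat.Coprime, Nat.gcd_sub_self_right hlt.le]) rfl
    exact ⟨true :: l, by simp [pair, hl]; omega⟩
  · obtain rfl : x = 1 := by simpa using hxy
    exact ⟨[], rfl⟩
  · obtain ⟨l, hl⟩ := ih (x - y + y) (by omega) (by omega) hy
      (by rwa [Nat.Coprime, Nat.gcd_sub_self_left hgt.le]) rfl
    exact ⟨false :: l, by simp [pair, hl]; omega⟩

noncomputable def equivCoprime :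
    List Bool ≃ {p : ℕ × ℕ // 0 < p.1 ∧ 0 < p.2 ∧ Nat.gcd p.1 p.2 = 1} :=
  Equiv.ofBijective (fun l => ⟨pair l, (pair_pos l).1, (pair_pos l).2, coprime_pair l⟩)
    ⟨fun _ _ h => pair_injective (congrArg Subtype.val h), fun ⟨_, hx, hy, hxy⟩ =>
      (exists_pair_eq hx hy hxy).imp fun _ h => Subtype.ext h⟩

noncomputable def potential (l : List Bool) : ℝ :=
  1 / (3 * ((pair l).1 : ℝ) ^ 3 * (pair l).2 ^ 3)

theorem sum_treeLevel_inv_mul (n : ℕ) :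
    ∑ l ∈ treeLevel n, 1 / ((pair l).1 * (pair l).2 : ℝ) = 1 := by
  refine (sum_treeLevel_of_additive (fun l => ?_) n).trans (by simp [pair])
  obtain ⟨hx, hy⟩ := pair_pos l
  simp only [pair, Nat.cast_add]
  rw [← one_div_mul_eq_add (by positivity) (by positivity) (by positivity)]

theorem sum_treeLevel_potential_le (n : ℕ) :
    ∑ l ∈ treeLevel n, potential l ≤ 1 / (3 * ((n : ℝ) + 1) ^ 2) := by
  calc ∑ l ∈ treeLevel n, potential l
      ≤ ∑ l ∈ treeLevel n,
          1 / (3 * ((n : ℝ) + 1) ^ 2) * (1 / ((pair l).1 * (pair l).2 : ℝ)) := by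
        refine sum_le_sum fun l hl => ?_
        obtain ⟨hx, hy⟩ := pair_pos l
        have hn : (n + 1 : ℝ) ≤ (pair l).1 * (pair l).2 := by
          rw [← mem_treeLevel.1 hl]; exact_mod_cast length_lt_mul_pair l
        rw [potential, div_mul_div_comm, one_mul,
          one_div_le_one_div (by positivity) (by positivity)]
        calc 3 * (n + 1 : ℝ) ^ 2 * ((pair l).1 * (pair l).2)
            ≤ 3 * ((pair l).1 * (pair l).2 : ℝ) ^ 2 * ((pair l).1 * (pair l).2) := by gcongr
          _ = 3 * ((pair l).1 : ℝ) ^ 3 * (pair l).2 ^ 3 := by ring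
    _ = 1 / (3 * ((n : ℝ) + 1) ^ 2) := by rw [← mul_sum, sum_treeLevel_inv_mul, mul_one]

theorem tendsto_sum_treeLevel_potential :
    Tendsto (fun n => ∑ l ∈ treeLevel n, potential l) atTop (𝓝 0) := by
  refine squeeze_zero (fun n => sum_nonneg fun l _ => by rw [potential]; positivity)
    sum_treeLevel_potential_le ?_
  refine tendsto_const_nhds.div_atTop (Tendsto.const_mul_atTop three_pos ?_)
  exact (tendsto_pow_atTop two_ne_zero).comp
    (tendsto_natCast_atTop_atTop.atTop_add tendsto_const_nhds)

theorem hasSum_pair :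
    HasSum (fun l : List Bool =>
      1 / (((pair l).1 : ℝ) ^ 2 * (pair l).2 ^ 2 * ((pair l).1 + (pair l).2) ^ 2)) (1 / 3) := by
  convert hasSum_of_tree_telescoping (fun l => ?_) (fun l => ?_) tendsto_sum_treeLevel_potential
    using 1
  · norm_num [potential, pair]
  · positivity
  obtain ⟨hx, hy⟩ := pair_pos l
  simp only [potential, pair, Nat.cast_add]
  exact one_div_sq_mul_sq_mul_add_sq three_ne_zero (by positivity) (by positivity) (by positivity)

end CalkinWilf

theorem sum_coprime_sq :
    HasSum (fun x : {p : ℕ × ℕ // 0 < p.1 ∧ 0 < p.2 ∧ Nat.gcd p.1 p.2 = 1} =>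
      1 / ((x.val.1 : ℝ) ^ 2 * (x.val.2 : ℝ) ^ 2 * ((x.val.1 : ℝ) + x.val.2) ^ 2))
      (1 / 3) :=
  CalkinWilf.equivCoprime.hasSum_iff.1 CalkinWilf.hasSum_pair
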